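/- arXiv:1809.06937 — 3 statements merged into one kernel-verified Lean document; each statement's English description precedes it below -/
import Mathlib

section
/- Fix a natural number N and a sequence λ_1, λ_2, … with λ_i ∈ [0,1] for all i. Define probability distributions β_t on ℕ by: β_0 is the point mass at N, and β_{t+1} is obtained by sampling b from β_t and then sampling from Binomial(⌊b/2⌋, λ_{t+1}). Let Λ_t = ∏_{j=1}^t λ_j. Then for all t ≥ 1, the second moment of β_t satisfies E[β_t²] ≤ ((N/2^t) Λ_t)² + (N/2^t) Λ_t (1 − Λ_t). -/
/-- The probability mass function of a Binomial(n, p) random variable at `k`. -/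
noncomputable def binomPMF (n : ℕ) (p : ℝ) (k : ℕ) : ℝ :=
  (n.choose k : ℝ) * p ^ k * (1 - p) ^ (n - k)

/-- The distributions `β_t` on ℕ: `β_0` is the point mass at `N`, and `β_{t+1}`
is obtained by sampling `b` from `β_t` and then sampling from
`Binomial(⌊b/2⌋, λ_{t+1})`. -/
lemma binomPMF_eq_zero {n k : ℕ} (p : ℝ) (h : n < k) : binomPMF n p k = 0 := by
  simp [binomPMF, Nat.choose_eq_zero_of_lt h]

lemma binomPMF_nonneg {n k : ℕ} {p : ℝ} (h0 : 0 ≤ p) (h1 : p ≤ 1) :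
    0 ≤ binomPMF n p k :=
  mul_nonneg (mul_nonneg (by positivity) (pow_nonneg h0 _)) (pow_nonneg (by linarith) _)

lemma sum_binomPMF (n : ℕ) (p : ℝ) :
    ∑ k ∈ Finset.range (n + 1), binomPMF n p k = 1 := by
  have h : (p + (1 - p)) ^ n = ∑ k ∈ Finset.range (n + 1),
      p ^ k * (1 - p) ^ (n - k) * (n.choose k : ℝ) := add_pow p (1 - p) n
  rw [show p + (1 - p) = 1 by ring, one_pow] at h
  rw [h]
  refine Finset.sum_congr rfl fun k _ => ?_
  unfold binomPMF; ring

lemma sum_mul_binomPMF (n : ℕ) (p : ℝ) :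
    ∑ k ∈ Finset.range (n + 1), (k : ℝ) * binomPMF n p k = n * p := by
  induction n with
  | zero => simp [binomPMF]
  | succ m _ =>
    rw [Finset.sum_range_succ']
    have key : ∀ i ∈ Finset.range (m + 1),
        ((i + 1 : ℕ) : ℝ) * binomPMF (m + 1) p (i + 1)
          = ((m : ℝ) + 1) * p * binomPMF m p i := by
      intro i hi
      have hc : (((m + 1).choose (i + 1) : ℕ) : ℝ) * ((i : ℝ) + 1)
          = ((m : ℝ) + 1) * (m.choose i : ℝ) := by
        have := Nat.add_one_mul_choose_eq m i
        exact_mod_cast congrArg (Nat.cast (R := ℝ)) this.symm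
      unfold binomPMF
      have hsub : m + 1 - (i + 1) = m - i := by omega
      rw [hsub]
      push_cast
      linear_combination (p ^ (i + 1) * (1 - p) ^ (m - i)) * hc
    rw [Finset.sum_congr rfl key]
    rw [← Finset.mul_sum, sum_binomPMF]
    push_cast
    ring

lemma sum_fac2_binomPMF (n : ℕ) (p : ℝ) :
    ∑ k ∈ Finset.range (n + 1), (k : ℝ) * ((k : ℝ) - 1) * binomPMF n p k
      = (n : ℝ) * ((n : ℝ) - 1) * p ^ 2 := by
  induction n with
  | zero => simp [binomPMF]
  | succ m _ =>
    rw [Finset.sum_range_succ']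
    have key : ∀ i ∈ Finset.range (m + 1),
        ((i + 1 : ℕ) : ℝ) * (((i + 1 : ℕ) : ℝ) - 1) * binomPMF (m + 1) p (i + 1)
          = ((m : ℝ) + 1) * p * ((i : ℝ) * binomPMF m p i) := by
      intro i hi
      have hc : (((m + 1).choose (i + 1) : ℕ) : ℝ) * ((i : ℝ) + 1)
          = ((m : ℝ) + 1) * (m.choose i : ℝ) := by
        have := Nat.add_one_mul_choose_eq m i
        exact_mod_cast congrArg (Nat.cast (R := ℝ)) this.symm
      unfold binomPMF
      have hsub : m + 1 - (i + 1) = m - i := by omega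
      rw [hsub]
      push_cast
      linear_combination ((i : ℝ) * p ^ (i + 1) * (1 - p) ^ (m - i)) * hc
    rw [Finset.sum_congr rfl key]
    rw [← Finset.mul_sum, sum_mul_binomPMF]
    push_cast
    ring

lemma sum_sq_binomPMF (n : ℕ) (p : ℝ) :
    ∑ k ∈ Finset.range (n + 1), (k : ℝ) ^ 2 * binomPMF n p k
      = (n : ℝ) * p * (1 - p) + ((n : ℝ) * p) ^ 2 := by
  have h1 := sum_mul_binomPMF n p
  have h2 := sum_fac2_binomPMF n p
  have : ∑ k ∈ Finset.range (n + 1), (k : ℝ) ^ 2 * binomPMF n p k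
      = ∑ k ∈ Finset.range (n + 1),
          ((k : ℝ) * ((k : ℝ) - 1) * binomPMF n p k + (k : ℝ) * binomPMF n p k) := by
    refine Finset.sum_congr rfl fun k _ => ?_; ring
  rw [this, Finset.sum_add_distrib, h1, h2]
  ring

noncomputable def beta (N : ℕ) (lam : ℕ → ℝ) : ℕ → ℕ → ℝ
  | 0, k => if k = N then 1 else 0
  | (t + 1), k => ∑' b : ℕ, beta N lam t b * binomPMF (b / 2) (lam (t + 1)) k

lemma beta_nonneg (N : ℕ) (lam : ℕ → ℝ) (hlam : ∀ i, 0 ≤ lam i ∧ lam i ≤ 1) :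
    ∀ t k, 0 ≤ beta N lam t k := by
  intro t
  induction t with
  | zero => intro k; simp only [beta]; split <;> norm_num
  | succ t ih =>
    intro k
    refine tsum_nonneg fun b => mul_nonneg (ih b) ?_
    exact binomPMF_nonneg (hlam (t + 1)).1 (hlam (t + 1)).2

lemma beta_supp (N : ℕ) (lam : ℕ → ℝ) :
    ∀ t k, N < k → beta N lam t k = 0 := by
  intro t
  induction t with
  | zero => intro k hk; simp only [beta]; rw [if_neg (by omega)]
  | succ t ih =>
    intro k hk
    show (∑' b : ℕ, beta N lam t b * binomPMF (b / 2) (lam (t + 1)) k) = 0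
    have h : (fun b : ℕ => beta N lam t b * binomPMF (b / 2) (lam (t + 1)) k)
        = fun _ => 0 := by
      funext b
      by_cases hb : N < b
      · rw [ih b hb, zero_mul]
      · rw [binomPMF_eq_zero _ (by omega), mul_zero]
    rw [h, tsum_zero]

lemma beta_succ_eq (N : ℕ) (lam : ℕ → ℝ) (t k : ℕ) :
    beta N lam (t + 1) k
      = ∑ b ∈ Finset.range (N + 1), beta N lam t b * binomPMF (b / 2) (lam (t + 1)) k := by
  show (∑' b : ℕ, beta N lam t b * binomPMF (b / 2) (lam (t + 1)) k) = _
  refine tsum_eq_sum fun b hb => ?_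
  have hb' : N < b := by simpa [Finset.mem_range, Nat.lt_succ_iff, Nat.not_le] using hb
  rw [beta_supp N lam t b hb', zero_mul]

lemma sum_beta_succ_rw (N : ℕ) (lam : ℕ → ℝ) (t : ℕ) (f : ℕ → ℝ) :
    ∑ k ∈ Finset.range (N + 1), f k * beta N lam (t + 1) k
      = ∑ b ∈ Finset.range (N + 1), beta N lam t b *
          (∑ k ∈ Finset.range (b / 2 + 1), f k * binomPMF (b / 2) (lam (t + 1)) k) := by
  simp only [beta_succ_eq N lam t, Finset.mul_sum]
  rw [Finset.sum_comm]
  refine Finset.sum_congr rfl fun b hb => ?_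
  have hbN : b / 2 ≤ N := le_trans (Nat.div_le_self b 2) (Finset.mem_range_succ_iff.mp hb)
  have hsub : ∑ x ∈ Finset.range (N + 1),
        f x * (beta N lam t b * binomPMF (b / 2) (lam (t + 1)) x)
      = ∑ x ∈ Finset.range (b / 2 + 1),
          f x * (beta N lam t b * binomPMF (b / 2) (lam (t + 1)) x) := by
    refine (Finset.sum_subset (Finset.range_subset_range.2 (by omega)) ?_).symm
    intro k _ hk
    have : b / 2 < k := by simpa [Finset.mem_range, Nat.lt_succ_iff, Nat.not_le] using hk
    simp [binomPMF_eq_zero _ this]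
  rw [hsub]
  exact Finset.sum_congr rfl fun k _ => by ring

lemma beta_moments (N : ℕ) (lam : ℕ → ℝ) (hlam : ∀ i, 0 ≤ lam i ∧ lam i ≤ 1) (t : ℕ) :
    (∑ k ∈ Finset.range (N + 1), (k : ℝ) * beta N lam t k
        ≤ (N : ℝ) / 2 ^ t * ∏ j ∈ Finset.Icc 1 t, lam j) ∧
    (∑ k ∈ Finset.range (N + 1), (k : ℝ) ^ 2 * beta N lam t k
        ≤ ((N : ℝ) / 2 ^ t * ∏ j ∈ Finset.Icc 1 t, lam j) ^ 2 +
            (N : ℝ) / 2 ^ t * (∏ j ∈ Finset.Icc 1 t, lam j) *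
              (1 - ∏ j ∈ Finset.Icc 1 t, lam j)) := by
  induction t with
  | zero =>
    have base : ∀ f : ℕ → ℝ, ∑ k ∈ Finset.range (N + 1), f k * beta N lam 0 k = f N := by
      intro f
      rw [Finset.sum_eq_single N]
      · simp [beta]
      · intro b _ hb; simp [beta, hb]
      · intro h; simp at h
    constructor
    · rw [base (fun k => (k : ℝ))]; simp
    · rw [base (fun k => (k : ℝ) ^ 2)]; simp
  | succ t ih =>
    obtain ⟨ih1, ih2⟩ := ih
    set p := lam (t + 1) with hpdef
    set L := ∏ j ∈ Finset.Icc 1 t, lam j with hLdef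
    set μ := (N : ℝ) / 2 ^ t * L with hμdef
    have hp0 : 0 ≤ p := (hlam (t + 1)).1
    have hp1 : p ≤ 1 := (hlam (t + 1)).2
    have hL0 : 0 ≤ L := Finset.prod_nonneg fun j _ => (hlam j).1
    have hL1 : L ≤ 1 := Finset.prod_le_one (fun j _ => (hlam j).1) (fun j _ => (hlam j).2)
    have hμ0 : 0 ≤ μ := mul_nonneg (div_nonneg (Nat.cast_nonneg N) (by positivity)) hL0
    have hLsucc : ∏ j ∈ Finset.Icc 1 (t + 1), lam j = L * p := by
      rw [hLdef, hpdef, ← Finset.prod_Icc_succ_top (Nat.succ_le_succ (Nat.zero_le t))]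
    have hβ : ∀ b, 0 ≤ beta N lam t b := beta_nonneg N lam hlam t
    have hdiv : ∀ b : ℕ, ((b / 2 : ℕ) : ℝ) ≤ (b : ℝ) / 2 := fun b => Nat.cast_div_le
    have hdiv0 : ∀ b : ℕ, (0 : ℝ) ≤ ((b / 2 : ℕ) : ℝ) := fun b => Nat.cast_nonneg _
    constructor
    · -- first moment
      rw [sum_beta_succ_rw N lam t (fun k => (k : ℝ))]
      have hin : ∀ b ∈ Finset.range (N + 1),
          beta N lam t b * (∑ k ∈ Finset.range (b / 2 + 1), (k : ℝ) * binomPMF (b / 2) p k)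
            = beta N lam t b * (((b / 2 : ℕ) : ℝ) * p) := by
        intro b _; rw [sum_mul_binomPMF]
      rw [Finset.sum_congr rfl hin]
      have step1 : ∑ b ∈ Finset.range (N + 1), beta N lam t b * (((b / 2 : ℕ) : ℝ) * p)
          ≤ ∑ b ∈ Finset.range (N + 1), p / 2 * ((b : ℝ) * beta N lam t b) := by
        refine Finset.sum_le_sum fun b _ => ?_
        have := hdiv b
        nlinarith [hβ b, mul_le_mul_of_nonneg_left (hdiv b) hp0]
      refine le_trans step1 ?_
      rw [← Finset.mul_sum]
      have : p / 2 * ∑ b ∈ Finset.range (N + 1), (b : ℝ) * beta N lam t b ≤ p / 2 * μ :=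
        mul_le_mul_of_nonneg_left ih1 (by linarith)
      refine le_trans this (le_of_eq ?_)
      rw [hLsucc, hμdef]
      field_simp
      ring
    · -- second moment
      rw [sum_beta_succ_rw N lam t (fun k => (k : ℝ) ^ 2)]
      have hin : ∀ b ∈ Finset.range (N + 1),
          beta N lam t b * (∑ k ∈ Finset.range (b / 2 + 1), (k : ℝ) ^ 2 * binomPMF (b / 2) p k)
            = beta N lam t b *
                (((b / 2 : ℕ) : ℝ) * p * (1 - p) + (((b / 2 : ℕ) : ℝ) * p) ^ 2) := by
        intro b _; rw [sum_sq_binomPMF]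
      rw [Finset.sum_congr rfl hin]
      have step1 : ∑ b ∈ Finset.range (N + 1), beta N lam t b *
            (((b / 2 : ℕ) : ℝ) * p * (1 - p) + (((b / 2 : ℕ) : ℝ) * p) ^ 2)
          ≤ ∑ b ∈ Finset.range (N + 1),
              (p * (1 - p) / 2 * ((b : ℝ) * beta N lam t b)
                + p ^ 2 / 4 * ((b : ℝ) ^ 2 * beta N lam t b)) := by
        refine Finset.sum_le_sum fun b _ => ?_
        have h1 := hdiv b
        have h2 := hdiv0 b
        have h3 := hβ b
        have hinner : ((b / 2 : ℕ) : ℝ) * p * (1 - p) + (((b / 2 : ℕ) : ℝ) * p) ^ 2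
            ≤ (b : ℝ) / 2 * p * (1 - p) + ((b : ℝ) / 2 * p) ^ 2 := by
          nlinarith [mul_nonneg hp0 (by linarith : (0:ℝ) ≤ 1 - p), sq_nonneg p,
            mul_nonneg (mul_nonneg (sub_nonneg.2 h1) (by linarith : (0:ℝ) ≤ (b : ℝ) / 2 + ((b / 2 : ℕ) : ℝ))) (sq_nonneg p)]
        calc beta N lam t b * (((b / 2 : ℕ) : ℝ) * p * (1 - p) + (((b / 2 : ℕ) : ℝ) * p) ^ 2)
            ≤ beta N lam t b * ((b : ℝ) / 2 * p * (1 - p) + ((b : ℝ) / 2 * p) ^ 2) :=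
              mul_le_mul_of_nonneg_left hinner h3
          _ = p * (1 - p) / 2 * ((b : ℝ) * beta N lam t b)
                + p ^ 2 / 4 * ((b : ℝ) ^ 2 * beta N lam t b) := by ring
      refine le_trans step1 ?_
      rw [Finset.sum_add_distrib, ← Finset.mul_sum, ← Finset.mul_sum]
      have c1 : (0:ℝ) ≤ p * (1 - p) / 2 := by nlinarith
      have c2 : (0:ℝ) ≤ p ^ 2 / 4 := by positivity
      have b1 := mul_le_mul_of_nonneg_left ih1 c1
      have b2 := mul_le_mul_of_nonneg_left ih2 c2
      have goal_eq : ((N : ℝ) / 2 ^ (t + 1) * ∏ j ∈ Finset.Icc 1 (t + 1), lam j) ^ 2 +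
            (N : ℝ) / 2 ^ (t + 1) * (∏ j ∈ Finset.Icc 1 (t + 1), lam j) *
              (1 - ∏ j ∈ Finset.Icc 1 (t + 1), lam j)
          = (μ * p / 2) ^ 2 + μ * p / 2 * (1 - L * p) := by
        rw [hLsucc, hμdef]
        field_simp
        ring
      rw [goal_eq]
      have key : p * (1 - p) / 2 * μ + p ^ 2 / 4 * (μ ^ 2 + μ * (1 - L))
          ≤ (μ * p / 2) ^ 2 + μ * p / 2 * (1 - L * p) := by
        nlinarith [mul_nonneg (mul_nonneg hμ0 (sq_nonneg p)) (sub_nonneg.2 hL1)]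
      linarith [b1, b2, key]

/-- For all `t ≥ 1`, the second moment of `β_t` satisfies
`E[β_t²] ≤ ((N / 2^t) Λ_t)² + (N / 2^t) Λ_t (1 − Λ_t)`,
where `Λ_t = ∏_{j=1}^t λ_j`. -/
theorem beta_second_moment_le (N : ℕ) (lam : ℕ → ℝ)
    (hlam : ∀ i, 0 ≤ lam i ∧ lam i ≤ 1) (t : ℕ) (ht : 1 ≤ t) :
    ∑' k : ℕ, (k : ℝ) ^ 2 * beta N lam t k ≤
      ((N : ℝ) / 2 ^ t * ∏ j ∈ Finset.Icc 1 t, lam j) ^ 2 +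
        (N : ℝ) / 2 ^ t * (∏ j ∈ Finset.Icc 1 t, lam j) *
          (1 - ∏ j ∈ Finset.Icc 1 t, lam j) := by
  have htsum : ∑' k : ℕ, (k : ℝ) ^ 2 * beta N lam t k
      = ∑ k ∈ Finset.range (N + 1), (k : ℝ) ^ 2 * beta N lam t k := by
    refine tsum_eq_sum fun k hk => ?_
    have : N < k := by simpa [Finset.mem_range, Nat.lt_succ_iff, Nat.not_le] using hk
    rw [beta_supp N lam t k this, mul_zero]
  rw [htsum]
  exact (beta_moments N lam hlam t).2
end

section
/- Let p ∈ (0,1]. For each integer i ≥ 1 set q_i = 2^i p / (2^i p + 1 − p). Then there exists a constant c ∈ ℝ (depending only on p) such that for all integers k ≥ 1, ∏_{i=1}^k (1 − q_i²) ≤ 2^{−k²/2 + c·k}. -/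
lemma sum_Icc_one_id_mul_two (n : ℕ) :
    (∑ i ∈ Finset.Icc 1 n, i) * 2 = n * (n + 1) := by
  induction n with
  | zero => simp
  | succ m ih =>
    rw [Finset.sum_Icc_succ_top (by omega)]
    nlinarith [ih]

/-- For `p ∈ (0,1]` and `q_i = 2^i p / (2^i p + 1 − p)`, there is a constant
`c` (depending only on `p`) such that `∏_{i=1}^k (1 − q_i²) ≤ 2^{−k²/2 + ck}`
for all `k ≥ 1`. -/
theorem survival_prob_bound (p : ℝ) (hp0 : 0 < p) (hp1 : p ≤ 1) :
    ∃ c : ℝ, ∀ k : ℕ, 1 ≤ k →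
      ∏ i ∈ Finset.Icc 1 k,
          (1 - ((2 : ℝ) ^ i * p / ((2 : ℝ) ^ i * p + 1 - p)) ^ 2) ≤
        (2 : ℝ) ^ (-(k : ℝ) ^ 2 / 2 + c * k) := by
  refine ⟨Real.logb 2 (2 / p), fun k hk => ?_⟩
  set c := Real.logb 2 (2 / p) with hc
  have h2p : (0:ℝ) < 2 / p := by positivity
  have hfac : ∀ i ∈ Finset.Icc 1 k,
      1 - ((2 : ℝ) ^ i * p / ((2 : ℝ) ^ i * p + 1 - p)) ^ 2
        ≤ (2/p) * ((2:ℝ)^i)⁻¹ := by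
    intro i _
    have ht : (0:ℝ) < (2:ℝ)^i := by positivity
    set t := (2:ℝ)^i with hti
    have hd : 0 < t * p + 1 - p := by nlinarith
    rw [div_pow]
    have e : 1 - (t*p)^2/(t*p+1-p)^2 = ((t*p+1-p)^2 - (t*p)^2)/(t*p+1-p)^2 := by
      field_simp
    have e' : (2/p) * t⁻¹ = 2/(p*t) := by field_simp
    rw [e, e', div_le_div_iff₀ (by positivity) (by positivity)]
    nlinarith [mul_pos ht hp0, sq_nonneg (1-p),
      mul_nonneg (mul_nonneg (le_of_lt ht) (le_of_lt hp0)) (sub_nonneg.2 hp1),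
      mul_pos (mul_pos ht hp0) (mul_pos ht hp0)]
  have hnonneg : ∀ i ∈ Finset.Icc 1 k,
      0 ≤ 1 - ((2 : ℝ) ^ i * p / ((2 : ℝ) ^ i * p + 1 - p)) ^ 2 := by
    intro i _
    have ht : (0:ℝ) < (2:ℝ)^i := by positivity
    have hd : 0 < (2:ℝ)^i * p + 1 - p := by nlinarith
    have hq1 : (2:ℝ)^i * p / ((2:ℝ)^i * p + 1 - p) ≤ 1 := by
      rw [div_le_one hd]; linarith
    have hq0 : 0 ≤ (2:ℝ)^i * p / ((2:ℝ)^i * p + 1 - p) := by positivity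
    nlinarith
  have h1 := Finset.prod_le_prod hnonneg hfac
  refine h1.trans ?_
  rw [Finset.prod_mul_distrib, Finset.prod_const, Nat.card_Icc]
  simp only [Nat.add_sub_cancel]
  rw [Finset.prod_inv_distrib, Finset.prod_pow_eq_pow_sum]
  set S := ∑ i ∈ Finset.Icc 1 k, i with hS
  have hSval : S * 2 = k * (k + 1) := sum_Icc_one_id_mul_two k
  have e1 : (2/p)^k = (2:ℝ) ^ (c * k) := by
    have h2c : (2:ℝ) ^ c = 2 / p := Real.rpow_logb two_pos (by norm_num) h2p
    rw [← h2c, ← Real.rpow_natCast ((2:ℝ)^c) k, ← Real.rpow_mul (by norm_num)]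
  have e2 : ((2:ℝ)^S)⁻¹ = (2:ℝ) ^ (-(S:ℝ)) := by
    rw [← Real.rpow_natCast (2:ℝ) S, ← Real.rpow_neg (by norm_num)]
  rw [e1, e2, ← Real.rpow_add two_pos]
  apply Real.rpow_le_rpow_left_iff (x := (2:ℝ)) one_lt_two |>.2
  have hSreal : (k:ℝ)^2 ≤ 2 * (S:ℝ) := by
    have : ((S * 2 : ℕ) : ℝ) = ((k * (k+1) : ℕ) : ℝ) := by rw [hSval]
    push_cast at this
    nlinarith [Nat.cast_nonneg (α := ℝ) k]
  linarith
end

section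
/- Let N ≥ 2 be even and let θ : Fin N → {0,1} with N₁ = |{v : θ v = 1}|. Then the maximum, over all fixed-point-free involutions σ of Fin N, of the Strongest Link total payoff (1/2)·∑_{v} max(θ v, θ(σ v)) equals min(N₁, N/2). -/
/-!
Since `max a b ≤ a + b` and `σ` permutes the vertices, any matching has total payoff at most
`N₁`, and trivially at most `N / 2`. Conversely, relabel the workers so that the type-1 workers
come first and pair position `k` with position `N - 1 - k`: every pair meeting one of the first
or one of the last `N₁` positions scores `1`, and there are exactly `min N (2 N₁)` such positions.
-/

open Finset

theorem Equiv.Perm.exists_forall_iff_of_card_filter_eq {α : Type*} [Fintype α]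
    {p q : α → Prop} [DecidablePred p] [DecidablePred q] (h : #{a | p a} = #{a | q a}) :
    ∃ e : Equiv.Perm α, ∀ a, p (e a) ↔ q a := by
  have hcard : Fintype.card {a // q a} = Fintype.card {a // p a} := by
    simp only [Fintype.card_subtype, h]
  have hcard' : Fintype.card {a // ¬q a} = Fintype.card {a // ¬p a} := by
    simp only [Fintype.card_subtype_compl, hcard]
  refine ⟨Equiv.subtypeCongr (Fintype.equivOfCardEq hcard) (Fintype.equivOfCardEq hcard'),
    fun a => ?_⟩
  by_cases ha : q a
  · simpa [Equiv.subtypeCongr, ha] using (Fintype.equivOfCardEq hcard ⟨a, ha⟩).2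
  · simpa [Equiv.subtypeCongr, ha] using (Fintype.equivOfCardEq hcard' ⟨a, ha⟩).2

theorem Fin.rev_ne_self_of_even {N : ℕ} (hN : Even N) (k : Fin N) : Fin.rev k ≠ k := by
  obtain ⟨m, rfl⟩ := hN
  intro h
  have := congrArg Fin.val h
  rw [Fin.val_rev] at this
  omega

theorem Fin.card_filter_val_lt_or_rev_val_lt (N n : ℕ) :
    #{k : Fin N | (k : ℕ) < n ∨ (Fin.rev k : ℕ) < n} = min N (2 * n) := by
  have : #{k : Fin N | (k : ℕ) < n ∨ (Fin.rev k : ℕ) < n} = #(Iio N \ Ico n (N - n)) := by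
    rw [← card_map Fin.valEmbedding]
    congr 1
    ext i
    simp only [mem_map, mem_filter, mem_univ, true_and, Fin.valEmbedding_apply, Fin.val_rev,
      mem_sdiff, mem_Iio, mem_Ico]
    constructor
    · rintro ⟨k, hk, rfl⟩
      omega
    · intro hi
      exact ⟨⟨i, hi.1⟩, by simp only; omega, rfl⟩
  rw [this, card_sdiff_of_subset (fun i => by simp only [mem_Ico, mem_Iio]; omega),
    Nat.card_Iio, Nat.card_Ico]
  omega

section ZeroOne

variable {α : Type*} [Fintype α] (f : α → ℕ)

theorem sum_max_comp_le_two_mul_sum {σ : α → α} (hσ : σ.Bijective) :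
    ∑ v, max (f v) (f (σ v)) ≤ 2 * ∑ v, f v := calc
  _ ≤ ∑ v, (f v + f (σ v)) := sum_le_sum fun v _ => max_le (by omega) (by omega)
  _ = 2 * ∑ v, f v := by
    rw [sum_add_distrib, Fintype.sum_bijective σ hσ _ _ fun _ => rfl, two_mul]

variable {f} (hf : ∀ v, f v ≤ 1)
include hf

theorem sum_eq_card_filter_eq_one : ∑ v, f v = #{v | f v = 1} := by
  rw [card_filter]
  exact sum_congr rfl fun v _ => by have := hf v; split_ifs <;> omega

theorem sum_max_comp_eq_card_filter (σ : α → α) :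
    ∑ v, max (f v) (f (σ v)) = #{v | f v = 1 ∨ f (σ v) = 1} := by
  rw [card_filter]
  exact sum_congr rfl fun v _ => by have := hf v; have := hf (σ v); split_ifs <;> omega

theorem sum_max_comp_le_card (σ : α → α) : ∑ v, max (f v) (f (σ v)) ≤ Fintype.card α := calc
  _ ≤ ∑ _v : α, 1 := sum_le_sum fun v _ => max_le (hf v) (hf (σ v))
  _ = Fintype.card α := by simp

theorem sum_max_comp_div_two_le {σ : α → α} (hσ : σ.Bijective) :
    (∑ v, max (f v) (f (σ v))) / 2 ≤ min #{v | f v = 1} (Fintype.card α / 2) := by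
  have := sum_max_comp_le_two_mul_sum f hσ
  have := sum_max_comp_le_card hf σ
  rw [sum_eq_card_filter_eq_one hf] at *
  omega

end ZeroOne

theorem strongest_link_benchmark_general (N : ℕ) (hEven : Even N)
    (θ : Fin N → ℕ) (hθ : ∀ v, θ v ≤ 1) :
    IsGreatest
      {x : ℕ | ∃ σ : Fin N → Fin N, (∀ v, σ (σ v) = v) ∧ (∀ v, σ v ≠ v) ∧
        x = (∑ v, max (θ v) (θ (σ v))) / 2}
      (min (Finset.univ.filter fun v => θ v = 1).card (N / 2)) := by
  set N₁ := #{v | θ v = 1}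
  have hN₁ : N₁ ≤ N := (card_le_univ _).trans_eq (Fintype.card_fin N)
  refine ⟨?_, ?_⟩
  · obtain ⟨e, he⟩ := Equiv.Perm.exists_forall_iff_of_card_filter_eq
      (p := fun v => θ v = 1) (q := fun k : Fin N => (k : ℕ) < N₁)
      (Fin.card_filter_val_lt.trans (min_eq_right hN₁)).symm
    have hpayoff : ∑ k, max (θ (e k)) (θ (e k.rev)) = min N (2 * N₁) := by
      rw [← Fin.card_filter_val_lt_or_rev_val_lt]
      exact (sum_max_comp_eq_card_filter (f := θ ∘ e) (fun k => hθ (e k)) Fin.rev).trans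
        (by simp only [Function.comp_apply, he])
    refine ⟨fun v => e (Fin.rev (e.symm v)), fun v => by simp, fun v h => ?_, ?_⟩
    · exact Fin.rev_ne_self_of_even hEven (e.symm v) (by simpa [Equiv.eq_symm_apply] using h)
    · rw [← Equiv.sum_comp e]
      simp only [Equiv.symm_apply_apply, hpayoff]
      obtain ⟨m, rfl⟩ := hEven
      omega
  · rintro _ ⟨σ, hσ, -, rfl⟩
    simpa using sum_max_comp_div_two_le hθ (Function.Involutive.bijective hσ)

/-- For even `N ≥ 2` and types `θ : Fin N → {0,1}`, the maximum over all
fixed-point-free involutions `σ` of the Strongest Link total payoff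
`(1/2)·∑_v max(θ v, θ(σ v))` equals `min(N₁, N/2)`, where `N₁` is the number
of type-1 workers. -/
theorem strongest_link_benchmark (N : ℕ) (hN : 2 ≤ N) (hEven : Even N)
    (θ : Fin N → ℕ) (hθ : ∀ v, θ v ≤ 1) :
    IsGreatest
      {x : ℕ | ∃ σ : Fin N → Fin N, (∀ v, σ (σ v) = v) ∧ (∀ v, σ v ≠ v) ∧
        x = (∑ v, max (θ v) (θ (σ v))) / 2}
      (min (Finset.univ.filter fun v => θ v = 1).card (N / 2)) :=
  strongest_link_benchmark_general N hEven θ hθ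
end
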